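/- Let M ∈ ℝ^{n×m} have rank r with singular value decomposition M = U*Σ*(V*)ᵀ, and suppose ‖(I − V*(V*)ᵀ)V‖₂ ≤ η for some V ∈ ℝ^{m×r} with orthonormal columns. Then for the matrix Û minimizing ‖M − ÛVᵀ‖_F over Û ∈ ℝ^{n×r} (namely Û = MV), one has ‖M − ÛVᵀ‖_F = ‖M(I − VVᵀ)‖_F ≤ ‖M‖_F · ‖(I − VVᵀ)(V*)‖₂ ≤ √2·η·‖M‖_F when η ≤ 1. -/

import Mathlib

open Matrix

/-- Spectral (operator) norm of a real matrix. -/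
noncomputable def sNorm {n r : ℕ} (A : Matrix (Fin n) (Fin r) ℝ) : ℝ :=
  ‖(LinearMap.toContinuousLinearMap (Matrix.toEuclideanLin A))‖

/-- Frobenius norm of a real matrix. -/
noncomputable def frob {n m : ℕ} (A : Matrix (Fin n) (Fin m) ℝ) : ℝ :=
  Real.sqrt (∑ i, ∑ j, (A i j) ^ 2)

/-!
Writing `M = (U* Σ) V*ᵀ`, the residual `M (1 - V Vᵀ)` equals `(U* Σ) ((1 - V Vᵀ) V*)ᵀ`, so its
Frobenius norm is at most `‖U* Σ‖_F ‖(1 - V Vᵀ) V*‖₂ = ‖M‖_F ‖(1 - V Vᵀ) V*‖₂`. For orthonormal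
`V`, `W` one has `‖(1 - V Vᵀ) W x‖² = ‖x‖² - ‖Vᵀ W x‖²`, so `‖(1 - V Vᵀ) W‖₂² = 1 - σ_min(Vᵀ W)²`;
as `Vᵀ W` is square, its smallest singular value is that of its transpose `Wᵀ V`, hence the
subspace distance is symmetric and bounded by `η ≤ √2 η`. Minimality of `Û = M V` is Pythagoras:
`M (1 - V Vᵀ)` is Frobenius-orthogonal to every `C Vᵀ`.
-/

theorem LinearMap.mul_norm_sq_le_norm_adjoint_apply_sq {𝕜 E F : Type*} [RCLike 𝕜]
    [NormedAddCommGroup E] [InnerProductSpace 𝕜 E] [FiniteDimensional 𝕜 E]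
    [NormedAddCommGroup F] [InnerProductSpace 𝕜 F] [FiniteDimensional 𝕜 F]
    (T : E →ₗ[𝕜] F) (hdim : Module.finrank 𝕜 E = Module.finrank 𝕜 F) {a : ℝ}
    (h : ∀ z, a * ‖z‖ ^ 2 ≤ ‖T z‖ ^ 2) (x : F) : a * ‖x‖ ^ 2 ≤ ‖T.adjoint x‖ ^ 2 := by
  rcases le_or_gt a 0 with ha | ha
  · exact (mul_nonpos_of_nonpos_of_nonneg ha (by positivity)).trans (by positivity)
  have hinj : Function.Injective T := by
    rw [← LinearMap.ker_eq_bot, LinearMap.ker_eq_bot']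
    intro z hz
    have : a * ‖z‖ ^ 2 ≤ 0 := by simpa [hz] using h z
    simpa [ha.ne'] using (nonpos_of_mul_nonpos_right this ha).antisymm (by positivity)
  obtain ⟨z, rfl⟩ := (LinearMap.injective_iff_surjective_of_finrank_eq_finrank hdim).1 hinj x
  set t := ‖T.adjoint (T z)‖
  have hcs : ‖T z‖ ^ 2 ≤ ‖z‖ * t := by
    calc ‖T z‖ ^ 2 = RCLike.re (inner 𝕜 z (T.adjoint (T z))) := by
          rw [LinearMap.adjoint_inner_right, ← inner_self_eq_norm_sq (𝕜 := 𝕜)]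
      _ ≤ ‖z‖ * t := (RCLike.re_le_norm _).trans (norm_inner_le_norm _ _)
  rcases (sq_nonneg ‖T z‖).eq_or_lt with hs | hs
  · rw [← hs, mul_zero]; positivity
  refine le_of_mul_le_mul_left ?_ hs
  calc ‖T z‖ ^ 2 * (a * ‖T z‖ ^ 2) = a * (‖T z‖ ^ 2) ^ 2 := by ring
    _ ≤ a * (‖z‖ * t) ^ 2 := by gcongr
    _ = (a * ‖z‖ ^ 2) * t ^ 2 := by ring
    _ ≤ ‖T z‖ ^ 2 * t ^ 2 := by gcongr; exact h z

section OperatorNorm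

variable {k l p : ℕ}

lemma toEuclideanLin_transpose (A : Matrix (Fin k) (Fin l) ℝ) :
    toEuclideanLin Aᵀ = (toEuclideanLin A).adjoint := by
  rw [← conjTranspose_eq_transpose_of_trivial, toEuclideanLin_conjTranspose_eq_adjoint]

lemma toEuclideanLin_mul_apply (A : Matrix (Fin k) (Fin l) ℝ) (B : Matrix (Fin l) (Fin p) ℝ)
    (x : EuclideanSpace ℝ (Fin p)) :
    toEuclideanLin (A * B) x = toEuclideanLin A (toEuclideanLin B x) := by
  simp

lemma inner_toEuclideanLin_transpose (A : Matrix (Fin k) (Fin l) ℝ) (x : EuclideanSpace ℝ (Fin l))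
    (y : EuclideanSpace ℝ (Fin k)) :
    inner ℝ (toEuclideanLin A x) y = inner ℝ x (toEuclideanLin Aᵀ y) := by
  rw [toEuclideanLin_transpose, LinearMap.adjoint_inner_right]

lemma norm_toEuclideanLin_of_transpose_mul_self {V : Matrix (Fin k) (Fin l) ℝ} (hV : Vᵀ * V = 1)
    (x : EuclideanSpace ℝ (Fin l)) : ‖toEuclideanLin V x‖ = ‖x‖ := by
  rw [← sq_eq_sq₀ (norm_nonneg _) (norm_nonneg _), ← real_inner_self_eq_norm_sq,
    inner_toEuclideanLin_transpose, ← toEuclideanLin_mul_apply, hV]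
  simp

/-- `sin² + cos² = 1` for the principal angles between the column spans of `V` and `W`. -/
lemma norm_sq_toEuclideanLin_one_sub_mul {V : Matrix (Fin k) (Fin l) ℝ}
    {W : Matrix (Fin k) (Fin p) ℝ} (hV : Vᵀ * V = 1) (hW : Wᵀ * W = 1)
    (x : EuclideanSpace ℝ (Fin p)) :
    ‖toEuclideanLin ((1 - V * Vᵀ) * W) x‖ ^ 2 =
      ‖x‖ ^ 2 - ‖toEuclideanLin (Vᵀ * W) x‖ ^ 2 := by
  set y := toEuclideanLin (Vᵀ * W) x
  have hsplit : toEuclideanLin ((1 - V * Vᵀ) * W) x = toEuclideanLin W x - toEuclideanLin V y := by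
    simp [y, Matrix.sub_mul, Matrix.mul_assoc]
  have hcross : inner ℝ (toEuclideanLin W x) (toEuclideanLin V y) = ‖y‖ ^ 2 := by
    rw [real_inner_comm, inner_toEuclideanLin_transpose, ← toEuclideanLin_mul_apply,
      real_inner_self_eq_norm_sq]
  rw [hsplit, norm_sub_sq_real, hcross, norm_toEuclideanLin_of_transpose_mul_self hW,
    norm_toEuclideanLin_of_transpose_mul_self hV]
  ring

lemma sNorm_nonneg (A : Matrix (Fin k) (Fin l) ℝ) : 0 ≤ sNorm A := norm_nonneg _

lemma norm_toEuclideanLin_le (A : Matrix (Fin k) (Fin l) ℝ) (x : EuclideanSpace ℝ (Fin l)) :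
    ‖toEuclideanLin A x‖ ≤ sNorm A * ‖x‖ :=
  (LinearMap.toContinuousLinearMap (toEuclideanLin A)).le_opNorm x

lemma sNorm_le_of_norm_le {A : Matrix (Fin k) (Fin l) ℝ} {C : ℝ} (hC : 0 ≤ C)
    (h : ∀ x, ‖toEuclideanLin A x‖ ≤ C * ‖x‖) : sNorm A ≤ C :=
  ContinuousLinearMap.opNorm_le_bound _ hC h

theorem sNorm_one_sub_mul_le_symm {V W : Matrix (Fin k) (Fin l) ℝ} (hV : Vᵀ * V = 1)
    (hW : Wᵀ * W = 1) : sNorm ((1 - V * Vᵀ) * W) ≤ sNorm ((1 - W * Wᵀ) * V) := by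
  set η := sNorm ((1 - W * Wᵀ) * V)
  have hcos : ∀ z, (1 - η ^ 2) * ‖z‖ ^ 2 ≤ ‖toEuclideanLin (Wᵀ * V) z‖ ^ 2 := by
    intro z
    have hsin := norm_toEuclideanLin_le ((1 - W * Wᵀ) * V) z
    rw [← sq_le_sq₀ (norm_nonneg _) (mul_nonneg (sNorm_nonneg _) (norm_nonneg _)),
      norm_sq_toEuclideanLin_one_sub_mul hW hV]
      at hsin
    linarith
  have hcosT : ∀ x, (1 - η ^ 2) * ‖x‖ ^ 2 ≤ ‖toEuclideanLin (Vᵀ * W) x‖ ^ 2 := by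
    simpa [← toEuclideanLin_transpose, transpose_mul] using
      (toEuclideanLin (Wᵀ * V)).mul_norm_sq_le_norm_adjoint_apply_sq rfl hcos
  refine sNorm_le_of_norm_le (sNorm_nonneg _) fun x => ?_
  rw [← sq_le_sq₀ (norm_nonneg _) (mul_nonneg (sNorm_nonneg _) (norm_nonneg _)),
    norm_sq_toEuclideanLin_one_sub_mul hV hW]
  linarith [hcosT x]

end OperatorNorm

section Frobenius

variable {k l p : ℕ}

lemma frob_nonneg (A : Matrix (Fin k) (Fin l) ℝ) : 0 ≤ frob A := Real.sqrt_nonneg _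

lemma frob_sq (A : Matrix (Fin k) (Fin l) ℝ) : frob A ^ 2 = ∑ i, ∑ j, A i j ^ 2 :=
  Real.sq_sqrt (by positivity)

lemma frob_sq_eq_trace (A : Matrix (Fin k) (Fin l) ℝ) : frob A ^ 2 = trace (Aᵀ * A) := by
  rw [frob_sq, trace, Finset.sum_comm]
  simp [mul_apply, sq]

lemma frob_sq_eq_sum_norm_sq_row (A : Matrix (Fin k) (Fin l) ℝ) :
    frob A ^ 2 = ∑ i, ‖WithLp.toLp 2 (A i)‖ ^ 2 := by
  simp [frob_sq, EuclideanSpace.norm_sq_eq]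

lemma frob_mul_transpose_le (X : Matrix (Fin k) (Fin l) ℝ) (B : Matrix (Fin p) (Fin l) ℝ) :
    frob (X * Bᵀ) ≤ frob X * sNorm B := by
  have hrow : ∀ i, WithLp.toLp 2 ((X * Bᵀ) i) = toEuclideanLin B (WithLp.toLp 2 (X i)) := by
    intro i; ext j; simp [mul_apply, mulVec, dotProduct, mul_comm]
  rw [← sq_le_sq₀ (frob_nonneg _) (by positivity [sNorm_nonneg B, frob_nonneg X]), mul_pow,
    frob_sq_eq_sum_norm_sq_row, frob_sq_eq_sum_norm_sq_row, Finset.sum_mul]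
  gcongr with i
  rw [hrow, ← mul_pow, mul_comm]
  gcongr
  exact norm_toEuclideanLin_le B _

lemma frob_mul_transpose_of_transpose_mul_self {W : Matrix (Fin l) (Fin p) ℝ} (hW : Wᵀ * W = 1)
    (X : Matrix (Fin k) (Fin p) ℝ) : frob (X * Wᵀ) = frob X := by
  rw [← sq_eq_sq₀ (frob_nonneg _) (frob_nonneg _), frob_sq_eq_trace, frob_sq_eq_trace,
    transpose_mul, transpose_transpose, Matrix.mul_assoc, trace_mul_comm, Matrix.mul_assoc,
    Matrix.mul_assoc, hW, Matrix.mul_one]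

lemma frob_add_sq_of_trace_eq_zero {A B : Matrix (Fin k) (Fin l) ℝ} (h : trace (Aᵀ * B) = 0) :
    frob (A + B) ^ 2 = frob A ^ 2 + frob B ^ 2 := by
  have h' : trace (Bᵀ * A) = 0 := by rw [← trace_transpose, transpose_mul, transpose_transpose, h]
  simp only [frob_sq_eq_trace, transpose_add, Matrix.add_mul, Matrix.mul_add, trace_add, h, h']
  ring

theorem frob_mul_one_sub_le {V : Matrix (Fin l) (Fin p) ℝ} (hV : Vᵀ * V = 1)
    (M : Matrix (Fin k) (Fin l) ℝ) (B : Matrix (Fin k) (Fin p) ℝ) :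
    frob (M * (1 - V * Vᵀ)) ≤ frob (M - B * Vᵀ) := by
  have hsplit : M - B * Vᵀ = M * (1 - V * Vᵀ) + (M * V - B) * Vᵀ := by
    simp only [Matrix.mul_sub, Matrix.sub_mul, Matrix.mul_one, Matrix.mul_assoc]; abel
  have horth : trace ((M * (1 - V * Vᵀ))ᵀ * ((M * V - B) * Vᵀ)) = 0 := by
    rw [← Matrix.mul_assoc, trace_mul_comm, transpose_mul, ← Matrix.mul_assoc, ← Matrix.mul_assoc]
    simp [transpose_sub, transpose_mul, Matrix.mul_sub, ← Matrix.mul_assoc, hV]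
  rw [← sq_le_sq₀ (frob_nonneg _) (frob_nonneg _), hsplit, frob_add_sq_of_trace_eq_zero horth]
  nlinarith [frob_nonneg ((M * V - B) * Vᵀ)]

end Frobenius

theorem stmt18_general {n m r : ℕ} (M : Matrix (Fin n) (Fin m) ℝ)
    (Ustar : Matrix (Fin n) (Fin r) ℝ) (Sd : Fin r → ℝ)
    (Vstar V : Matrix (Fin m) (Fin r) ℝ)
    (hVs : Vstarᵀ * Vstar = 1) (hV : Vᵀ * V = 1)
    (hM : M = Ustar * Matrix.diagonal Sd * Vstarᵀ)
    (η : ℝ) (hη0 : 0 ≤ η)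
    (hdist : sNorm ((1 - Vstar * Vstarᵀ) * V) ≤ η)
    (Uhat : Matrix (Fin n) (Fin r) ℝ) (hUhat : Uhat = M * V) :
    (∀ B : Matrix (Fin n) (Fin r) ℝ, frob (M - Uhat * Vᵀ) ≤ frob (M - B * Vᵀ)) ∧
    frob (M - Uhat * Vᵀ) = frob (M * (1 - V * Vᵀ)) ∧
    frob (M * (1 - V * Vᵀ)) ≤ frob M * sNorm ((1 - V * Vᵀ) * Vstar) ∧
    frob (M * (1 - V * Vᵀ)) ≤ Real.sqrt 2 * η * frob M := by
  have hres : M - Uhat * Vᵀ = M * (1 - V * Vᵀ) := by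
    rw [hUhat, Matrix.mul_sub, Matrix.mul_one, Matrix.mul_assoc]
  have hfactor : M * (1 - V * Vᵀ) = Ustar * diagonal Sd * ((1 - V * Vᵀ) * Vstar)ᵀ := by
    simp [hM, transpose_mul, transpose_sub, Matrix.mul_assoc]
  have hproj : frob (M * (1 - V * Vᵀ)) ≤ frob M * sNorm ((1 - V * Vᵀ) * Vstar) := by
    rw [hfactor, hM, frob_mul_transpose_of_transpose_mul_self hVs]
    exact frob_mul_transpose_le _ _
  have hangle : sNorm ((1 - V * Vᵀ) * Vstar) ≤ η := (sNorm_one_sub_mul_le_symm hV hVs).trans hdist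
  refine ⟨fun B => hres ▸ frob_mul_one_sub_le hV M B, by rw [hres], hproj, ?_⟩
  calc frob (M * (1 - V * Vᵀ)) ≤ frob M * η :=
        hproj.trans (mul_le_mul_of_nonneg_left hangle (frob_nonneg M))
    _ ≤ frob M * (Real.sqrt 2 * η) := mul_le_mul_of_nonneg_left
        (le_mul_of_one_le_left hη0 (Real.one_le_sqrt.2 one_le_two)) (frob_nonneg M)
    _ = Real.sqrt 2 * η * frob M := mul_comm _ _

theorem stmt18 {n m r : ℕ} (M : Matrix (Fin n) (Fin m) ℝ)
    (Ustar : Matrix (Fin n) (Fin r) ℝ) (Sd : Fin r → ℝ)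
    (Vstar V : Matrix (Fin m) (Fin r) ℝ)
    (hU : Ustarᵀ * Ustar = 1) (hVs : Vstarᵀ * Vstar = 1) (hV : Vᵀ * V = 1)
    (hM : M = Ustar * Matrix.diagonal Sd * Vstarᵀ)
    (η : ℝ) (hη0 : 0 ≤ η) (hη1 : η ≤ 1)
    (hdist : sNorm ((1 - Vstar * Vstarᵀ) * V) ≤ η)
    (Uhat : Matrix (Fin n) (Fin r) ℝ) (hUhat : Uhat = M * V) :
    (∀ B : Matrix (Fin n) (Fin r) ℝ, frob (M - Uhat * Vᵀ) ≤ frob (M - B * Vᵀ)) ∧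
    frob (M - Uhat * Vᵀ) = frob (M * (1 - V * Vᵀ)) ∧
    frob (M * (1 - V * Vᵀ)) ≤ frob M * sNorm ((1 - V * Vᵀ) * Vstar) ∧
    frob (M * (1 - V * Vᵀ)) ≤ Real.sqrt 2 * η * frob M :=
  stmt18_general M Ustar Sd Vstar V hVs hV hM η hη0 hdist Uhat hUhat
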